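/- arXiv:math/9812018 — 2 statements merged into one kernel-verified Lean document; each statement's English description precedes it below -/
import Mathlib

section
/- The number of 6-tuples of transpositions (τ₁,...,τ₆) in the symmetric group S₃ whose product τ₁τ₂⋯τ₆ is the identity and which generate a transitive subgroup of S₃ is 3⁵ − 3 = 240. -/
open Equiv

instance decIsSwap : DecidablePred (Perm.IsSwap (α := Fin 3)) := fun f =>
  decidable_of_iff (∃ x y, x ≠ y ∧ f = Equiv.swap x y) Iff.rfl

private def fsw : Fin 3 → Perm (Fin 3)
  | 0 => Equiv.swap 0 1
  | 1 => Equiv.swap 0 2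
  | 2 => Equiv.swap 1 2

private def gsw (s : Perm (Fin 3)) : Fin 3 :=
  if s = Equiv.swap 0 1 then 0 else if s = Equiv.swap 0 2 then 1 else 2

private lemma fsw_gsw {s : Perm (Fin 3)} (hs : s.IsSwap) : fsw (gsw s) = s := by
  revert hs; revert s; decide

private lemma gsw_fsw : ∀ c : Fin 3, gsw (fsw c) = c := by decide

private lemma fsw_isSwap : ∀ c : Fin 3, (fsw c).IsSwap := by decide

private lemma fsw_inj {c d : Fin 3} (h : fsw c = fsw d) : c = d := by
  revert h; revert c d; decide

lemma two_swaps_transitive (s t : Perm (Fin 3)) (hs : s.IsSwap) (ht : t.IsSwap)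
    (hst : s ≠ t) (x y : Fin 3) :
    s x = y ∨ t x = y ∨ (s*t) x = y ∨ (t*s) x = y ∨ (s*t*s) x = y ∨ (1 : Perm (Fin 3)) x = y := by
  revert hs ht hst x y; revert s t; decide

set_option maxRecDepth 100000 in
set_option maxHeartbeats 2000000 in
private lemma count240 :
    Fintype.card {c : Fin 6 → Fin 3 //
      (List.ofFn (fun i => fsw (c i))).prod = 1 ∧ ∃ i j : Fin 6, c i ≠ c j} = 240 := by
  decide

private lemma third_elt : ∀ a b : Fin 3, a ≠ b → ∃ c : Fin 3, c ≠ a ∧ c ≠ b := by decide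

private lemma trans_iff (τ : Fin 6 → Perm (Fin 3)) (hsw : ∀ i, (τ i).IsSwap) :
    (∀ a b : Fin 3, ∃ g ∈ Subgroup.closure (Set.range τ), g a = b) ↔ ∃ i j : Fin 6, τ i ≠ τ j := by
  constructor
  · intro htr
    by_contra hne
    push_neg at hne
    have hrange : Set.range τ = {τ 0} := by
      ext g; simp only [Set.mem_range, Set.mem_singleton_iff]
      exact ⟨fun ⟨i, hi⟩ => hi ▸ hne i 0, fun h => ⟨0, h.symm⟩⟩
    obtain ⟨a, b, hab, hs⟩ := hsw 0
    obtain ⟨c, hca, hcb⟩ := third_elt a b hab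
    obtain ⟨g, hg, hgc⟩ := htr c a
    rw [hrange, Subgroup.mem_closure_singleton] at hg
    obtain ⟨n, hn⟩ := hg
    have h2 : (τ 0) ^ (2 : ℤ) = 1 := by
      rw [zpow_two, hs]; exact Equiv.swap_mul_self a b
    have hg1 : g = 1 ∨ g = τ 0 := by
      rcases Int.even_or_odd n with ⟨k, hk⟩ | ⟨k, hk⟩
      · left; rw [← hn, hk, ← two_mul, zpow_mul, h2, one_zpow]
      · right; rw [← hn, hk, zpow_add, zpow_mul, h2, one_zpow, one_mul, zpow_one]
    rcases hg1 with rfl | rfl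
    · exact hca (by simpa using hgc)
    · rw [hs] at hgc
      exact hca ((Equiv.swap_apply_of_ne_of_ne hca hcb).symm.trans hgc)
  · rintro ⟨i, j, hij⟩ a b
    have hi : τ i ∈ Subgroup.closure (Set.range τ) :=
      Subgroup.subset_closure (Set.mem_range_self i)
    have hj : τ j ∈ Subgroup.closure (Set.range τ) :=
      Subgroup.subset_closure (Set.mem_range_self j)
    rcases two_swaps_transitive (τ i) (τ j) (hsw i) (hsw j) hij a b with h | h | h | h | h | h
    · exact ⟨τ i, hi, h⟩
    · exact ⟨τ j, hj, h⟩
    · exact ⟨_, mul_mem hi hj, h⟩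
    · exact ⟨_, mul_mem hj hi, h⟩
    · exact ⟨_, mul_mem (mul_mem hi hj) hi, h⟩
    · exact ⟨1, one_mem _, h⟩

private def codeEquiv :
    {τ : Fin 6 → Perm (Fin 3) //
      (∀ i, (τ i).IsSwap) ∧ (List.ofFn τ).prod = 1 ∧ ∃ i j : Fin 6, τ i ≠ τ j} ≃
    {c : Fin 6 → Fin 3 //
      (List.ofFn (fun i => fsw (c i))).prod = 1 ∧ ∃ i j : Fin 6, c i ≠ c j} where
  toFun := fun τ =>
    ⟨fun i => gsw (τ.1 i), by
      obtain ⟨τ, hsw, hp, i, j, hij⟩ := τ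
      have he : (fun k => fsw (gsw (τ k))) = τ := funext fun k => fsw_gsw (hsw k)
      refine ⟨?_, i, j, fun h => hij ?_⟩
      · rw [show List.ofFn (fun k => fsw (gsw (τ k))) = List.ofFn τ from congrArg _ he]
        exact hp
      · have : fsw (gsw (τ i)) = fsw (gsw (τ j)) := congrArg fsw h
        rwa [fsw_gsw (hsw i), fsw_gsw (hsw j)] at this⟩
  invFun := fun c =>
    ⟨fun i => fsw (c.1 i), fun i => fsw_isSwap (c.1 i), c.2.1, by
      obtain ⟨c, hp, i, j, hij⟩ := c
      exact ⟨i, j, fun h => hij (fsw_inj h)⟩⟩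
  left_inv := fun ⟨τ, hsw, _⟩ => Subtype.ext (funext fun k => fsw_gsw (hsw k))
  right_inv := fun ⟨c, _⟩ => Subtype.ext (funext fun k => gsw_fsw (c k))

/-- The number of 6-tuples of transpositions in S₃ whose product is the identity
and which generate a transitive subgroup of S₃ is 3⁵ − 3 = 240. -/
theorem stmt0 :
    Nat.card {τ : Fin 6 → Equiv.Perm (Fin 3) //
      (∀ i, (τ i).IsSwap) ∧ (List.ofFn τ).prod = 1 ∧
      (∀ a b : Fin 3, ∃ g ∈ Subgroup.closure (Set.range τ), g a = b)} = 3 ^ 5 - 3 ∧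
    3 ^ 5 - 3 = 240 := by
  refine ⟨?_, by norm_num⟩
  have h1 : Nat.card {τ : Fin 6 → Equiv.Perm (Fin 3) //
      (∀ i, (τ i).IsSwap) ∧ (List.ofFn τ).prod = 1 ∧
      (∀ a b : Fin 3, ∃ g ∈ Subgroup.closure (Set.range τ), g a = b)} =
      Nat.card {τ : Fin 6 → Perm (Fin 3) //
      (∀ i, (τ i).IsSwap) ∧ (List.ofFn τ).prod = 1 ∧ ∃ i j : Fin 6, τ i ≠ τ j} := by
    apply Nat.card_congr
    apply Equiv.subtypeEquivRight
    intro τ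
    constructor
    · rintro ⟨hsw, hp, htr⟩; exact ⟨hsw, hp, (trans_iff τ hsw).mp htr⟩
    · rintro ⟨hsw, hp, htr⟩; exact ⟨hsw, hp, (trans_iff τ hsw).mpr htr⟩
  rw [h1, Nat.card_congr codeEquiv, Nat.card_eq_fintype_card, count240]; norm_num
end

section
/- The number of 10-tuples of transpositions (τ₁,...,τ₁₀) in S₃ whose product is the identity and which generate a transitive subgroup, counted up to simultaneous conjugation (i.e. divided by |S₃| = 6), is (3⁹ − 3)/6 = 3280. -/
namespace Stmt3Aux

abbrev S := Equiv.Perm (Fin 3)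

instance : DecidablePred (Equiv.Perm.IsSwap (α := Fin 3)) :=
  fun f => decidable_of_iff (∃ x y, x ≠ y ∧ f = Equiv.swap x y) Iff.rfl

lemma sign_neg_isSwap : ∀ g : S, Equiv.Perm.sign g = -1 → g.IsSwap := by decide

lemma fix_exists : ∀ s : S, s.IsSwap → ∃ c d : Fin 3, s c = c ∧ c ≠ d := by decide

lemma four_elems : ∀ s t : S, (s.IsSwap ∧ t.IsSwap ∧ s ≠ t) →
    ∀ a b : Fin 3, a = b ∨ s a = b ∨ t a = b ∨ (s * t * s) a = b := by decide

lemma swap_sq {s : S} (h : s.IsSwap) : s * s = 1 := by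
  obtain ⟨x, y, hxy, rfl⟩ := h; exact Equiv.swap_mul_self x y

lemma swap_pow9 {s : S} (h : s.IsSwap) : s ^ 9 = s := by
  have h2 : s ^ 2 = 1 := by rw [pow_two]; exact swap_sq h
  calc s ^ 9 = (s ^ 2) ^ 4 * s := by rw [← pow_mul, ← pow_succ]
    _ = s := by rw [h2]; simp

lemma transitive_iff (τ : Fin 10 → S) (hs : ∀ i, (τ i).IsSwap) :
    (∀ a b : Fin 3, ∃ g ∈ Subgroup.closure (Set.range τ), g a = b) ↔
      ∃ i j, τ i ≠ τ j := by
  constructor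
  · intro htr
    by_contra hc
    push_neg at hc
    obtain ⟨c, d, hfix, hcd⟩ := fix_exists (τ 0) (hs 0)
    obtain ⟨g, hg, hgc⟩ := htr c d
    have hle : Subgroup.closure (Set.range τ) ≤ MulAction.stabilizer S c := by
      rw [Subgroup.closure_le]
      rintro _ ⟨i, rfl⟩
      have h0 : τ i = τ 0 := hc i 0
      have : τ i ∈ MulAction.stabilizer S c := by
        rw [MulAction.mem_stabilizer_iff, Equiv.Perm.smul_def, h0, hfix]
      exact this
    have : g c = c := hle hg
    exact hcd (this ▸ hgc)
  · rintro ⟨i, j, hij⟩ a b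
    have hmem : ∀ k, τ k ∈ Subgroup.closure (Set.range τ) := fun k =>
      Subgroup.subset_closure (Set.mem_range_self k)
    rcases four_elems (τ i) (τ j) ⟨hs i, hs j, hij⟩ a b with h | h | h | h
    · exact ⟨1, one_mem _, h⟩
    · exact ⟨τ i, hmem i, h⟩
    · exact ⟨τ j, hmem j, h⟩
    · exact ⟨τ i * τ j * τ i, mul_mem (mul_mem (hmem i) (hmem j)) (hmem i), h⟩

abbrev T := {s : S // s.IsSwap}

lemma cardT : Fintype.card T = 3 := by decide

/-- product of first 9 entries -/
noncomputable def theEquiv :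
    {τ : Fin 10 → S // (∀ i, (τ i).IsSwap) ∧ (List.ofFn τ).prod = 1 ∧ ∃ i j, τ i ≠ τ j} ≃
    {f : Fin 9 → T // ∃ i j, f i ≠ f j} where
  toFun τh := ⟨fun i => ⟨τh.1 i.castSucc, τh.2.1 _⟩, by
    obtain ⟨τ, hs, hp, i, j, hij⟩ := τh
    by_contra hcon
    push_neg at hcon
    have hcon' : ∀ i j : Fin 9, τ i.castSucc = τ j.castSucc := fun i j =>
      congrArg Subtype.val (hcon i j)
    -- all first 9 equal; deduce last equals them via product = 1
    set s := τ ((0 : Fin 9).castSucc) with hsdef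
    have hall9 : ∀ i : Fin 9, τ i.castSucc = s := fun i => hcon' i 0
    have hprod : (List.ofFn τ).prod =
        (List.ofFn fun i : Fin 9 => τ i.castSucc).prod * τ (Fin.last 9) := by
      rw [List.ofFn_succ' τ, List.prod_concat]
    have h9 : (List.ofFn fun i : Fin 9 => τ i.castSucc).prod = s ^ 9 := by
      simp only [hall9]
      rw [List.ofFn_const, List.prod_replicate]
    have hlast : τ (Fin.last 9) = s := by
      have hss : s.IsSwap := by rw [hsdef]; exact hs _
      have h1 : s ^ 9 * τ (Fin.last 9) = 1 := by rw [← h9, ← hprod, hp]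
      have h2 : (s ^ 9)⁻¹ = τ (Fin.last 9) := inv_eq_of_mul_eq_one_right h1
      rw [swap_pow9 hss] at h2
      rw [← h2]
      exact inv_eq_of_mul_eq_one_left (swap_sq hss)
    have heq : ∀ k : Fin 10, τ k = s := by
      intro k
      induction k using Fin.lastCases with
      | last => exact hlast
      | cast i => exact hall9 i
    exact hij (by rw [heq i, heq j])⟩
  invFun σh := ⟨Fin.snoc (fun i => (σh.1 i).1) ((List.ofFn fun i => (σh.1 i).1).prod)⁻¹, by
    obtain ⟨σ, i0, j0, hij⟩ := σh
    refine ⟨?_, ?_, ?_⟩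
    · intro k
      induction k using Fin.lastCases with
      | last =>
        rw [Fin.snoc_last]
        apply sign_neg_isSwap
        rw [map_inv]
        have : Equiv.Perm.sign (List.ofFn fun i => (σ i).1).prod = -1 := by
          rw [map_list_prod, List.map_ofFn, List.prod_ofFn]
          have h1 : ∀ i : Fin 9, (Equiv.Perm.sign ∘ fun i => (σ i).1) i = -1 :=
            fun i => (σ i).2.sign_eq
          simp only [h1]
          rw [Finset.prod_const]
          decide
        rw [this]; decide
      | cast i => rw [Fin.snoc_castSucc]; exact (σ i).2
    · rw [List.ofFn_succ', List.prod_concat, Fin.snoc_last]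
      simp only [Fin.snoc_castSucc]
      exact mul_inv_cancel _
    · refine ⟨i0.castSucc, j0.castSucc, ?_⟩
      rw [Fin.snoc_castSucc, Fin.snoc_castSucc]
      exact fun h => hij (Subtype.ext h)⟩
  left_inv := by
    rintro ⟨τ, hs, hp, hne⟩
    apply Subtype.ext
    funext k
    induction k using Fin.lastCases with
    | last =>
      simp only [Fin.snoc_last]
      have hprod : (List.ofFn τ).prod =
          (List.ofFn fun i : Fin 9 => τ i.castSucc).prod * τ (Fin.last 9) := by
        rw [List.ofFn_succ' τ, List.prod_concat]
      have h1 : (List.ofFn fun i : Fin 9 => τ i.castSucc).prod * τ (Fin.last 9) = 1 := by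
        rw [← hprod, hp]
      exact inv_eq_of_mul_eq_one_right h1
    | cast i => simp only [Fin.snoc_castSucc]
  right_inv := by
    rintro ⟨σ, hne⟩
    apply Subtype.ext
    funext i
    apply Subtype.ext
    simp only [Fin.snoc_castSucc]

lemma card_nonconst : Fintype.card {f : Fin 9 → T // ∃ i j, f i ≠ f j} = 3 ^ 9 - 3 := by
  have e1 : {f : Fin 9 → T // ∃ i j, f i ≠ f j} ≃ {f : Fin 9 → T // ¬ ∀ i j, f i = f j} :=
    Equiv.subtypeEquivRight (fun f => by push_neg; rfl)
  rw [Fintype.card_congr e1, Fintype.card_subtype_compl]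
  have e2 : {f : Fin 9 → T // ∀ i j, f i = f j} ≃ T :=
    { toFun := fun f => f.1 0
      invFun := fun t => ⟨fun _ => t, fun _ _ => rfl⟩
      left_inv := fun ⟨f, hf⟩ => Subtype.ext (funext fun i => hf 0 i)
      right_inv := fun t => rfl }
  rw [Fintype.card_congr e2, Fintype.card_fun, cardT]
  simp

end Stmt3Aux

/-- The number of 10-tuples of transpositions in S₃ with product the identity
generating a transitive subgroup, counted up to simultaneous conjugation
(i.e. divided by |S₃| = 6), is (3⁹ − 3)/6 = 3280. -/
theorem stmt3 :
    Nat.card {τ : Fin 10 → Equiv.Perm (Fin 3) //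
      (∀ i, (τ i).IsSwap) ∧ (List.ofFn τ).prod = 1 ∧
      (∀ a b : Fin 3, ∃ g ∈ Subgroup.closure (Set.range τ), g a = b)} / 6 =
      (3 ^ 9 - 3) / 6 ∧
    ((3 : ℕ) ^ 9 - 3) / 6 = 3280 := by
  constructor
  · have h1 : Nat.card {τ : Fin 10 → Equiv.Perm (Fin 3) //
        (∀ i, (τ i).IsSwap) ∧ (List.ofFn τ).prod = 1 ∧
        (∀ a b : Fin 3, ∃ g ∈ Subgroup.closure (Set.range τ), g a = b)} = 3 ^ 9 - 3 := by
      rw [Nat.card_congr (Equiv.subtypeEquivRight (fun τ =>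
        and_congr_right fun h1 => and_congr_right fun _ => Stmt3Aux.transitive_iff τ h1))]
      rw [Nat.card_congr Stmt3Aux.theEquiv, Nat.card_eq_fintype_card, Stmt3Aux.card_nonconst]
    rw [h1]
  · norm_num
end
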